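/- Fix an integer r ≥ 1, for every ordered pair (i,j) with 1 ≤ i < j ≤ r an element m_{ij} ∈ ℤ², a function Ω : ℤ² → ℤ, and for every γ ∈ ℤ² a vector n_γ ∈ ℂ² with ⟨γ,n_γ⟩ = 0. Let L̃ ⊆ 𝔤 be the ℂ-submodule spanned by all elements (E_{ij},0)·z^{γ+m_{ij}} (for i < j, γ ∈ ℤ²) and (0, Ω(γ')·n_{γ'})·z^{γ+γ'} (for γ,γ' ∈ ℤ²), where E_{ij} ∈ gl(r,ℂ) is the elementary matrix with a single 1 in position (i,j). Then L̃ is closed under the bracket [·,·]~; in particular (L̃,[·,·]~) is a Lie ring. -/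

import Mathlib

open Finsupp

/-- The pairing `⟨m,n⟩ = m₁n₁ + m₂n₂` between `ℤ²` and `ℂ²`. -/
noncomputable def pairMN (m : Fin 2 → ℤ) (n : Fin 2 → ℂ) : ℂ :=
  (m 0 : ℂ) * n 0 + (m 1 : ℂ) * n 1

/-- Coefficients: pairs `(A, n)` with `A ∈ gl(r,ℂ)` and `n ∈ ℂ²`. -/
abbrev tvCoef (r : ℕ) := Matrix (Fin r) (Fin r) ℂ × (Fin 2 → ℂ)

/-- The module `𝔤 = ⊕_{m ∈ ℤ²} z^m · (gl(r,ℂ) × ℂ²)`. -/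
abbrev tvModule (r : ℕ) := (Fin 2 → ℤ) →₀ tvCoef r

/-- The bracket of pure coefficients. -/
noncomputable def coefBr {r : ℕ} (v : tvCoef r) (m : Fin 2 → ℤ)
    (v' : tvCoef r) (m' : Fin 2 → ℤ) : tvCoef r :=
  (v.1 * v'.1 - v'.1 * v.1 + pairMN m' v.2 • v'.1 - pairMN m v'.2 • v.1,
   pairMN m' v.2 • v'.2 - pairMN m v'.2 • v.2)

/-- The bracket `[·,·]~` on `𝔤`, extended ℂ-bilinearly from pure elements. -/
noncomputable def tvBracket {r : ℕ} (x y : tvModule r) : tvModule r :=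
  x.sum fun m v => y.sum fun m' v' => Finsupp.single (m + m') (coefBr v m v' m')

/-- The ℂ-submodule `L̃` spanned by the type-S generators `(E_{ij},0)z^{γ+m_{ij}}`
(for `i < j`) and the type-K generators `(0, Ω(γ')·n_{γ'})z^{γ+γ'}`. -/
noncomputable def Ltilde (r : ℕ) (mE : Fin r → Fin r → (Fin 2 → ℤ))
    (Ω : (Fin 2 → ℤ) → ℤ) (nvec : (Fin 2 → ℤ) → (Fin 2 → ℂ)) :
    Submodule ℂ (tvModule r) :=
  Submodule.span ℂ
    ({x | ∃ (i j : Fin r) (_ : i < j) (γ : Fin 2 → ℤ),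
        x = Finsupp.single (γ + mE i j) ((Matrix.single i j 1, 0) : tvCoef r)} ∪
     {x | ∃ (γ γ' : Fin 2 → ℤ),
        x = Finsupp.single (γ + γ') ((0, (Ω γ' : ℂ) • nvec γ') : tvCoef r)})

/-!
The bracket is ℂ-bilinear, so it suffices to bracket two generators of `L̃`. Every bracket
involving a type-S generator is of the form `(B, 0) z^m` with `B` strictly upper triangular:
for two type-S generators `B` is the commutator `[E_{ij}, E_{kl}]`, and products of strictly
upper triangular matrices are strictly upper triangular (this is where `i < j` enters). Such
elements lie in `L̃` because the shift `γ` in the generators is arbitrary. The bracket of two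
type-K generators is `(0, a Ω(γ₂') n_{γ₂'} - b Ω(γ₁') n_{γ₁'}) z^m`, again in `L̃`.
-/

namespace Matrix

variable {n R : Type*} [LinearOrder n]

def IsStrictUpperTriangular [Zero R] (A : Matrix n n R) : Prop :=
  ∀ ⦃i j⦄, j ≤ i → A i j = 0

namespace IsStrictUpperTriangular

theorem mul [Fintype n] [NonUnitalNonAssocSemiring R] {A B : Matrix n n R}
    (hA : A.IsStrictUpperTriangular) (hB : B.IsStrictUpperTriangular) :
    (A * B).IsStrictUpperTriangular := by
  intro i j hji
  refine Finset.sum_eq_zero fun k _ => ?_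
  rcases le_or_gt k i with hki | hik
  · simp only [hA hki, zero_mul]
  · simp only [hB (hji.trans hik.le), mul_zero]

theorem sub [AddGroup R] {A B : Matrix n n R}
    (hA : A.IsStrictUpperTriangular) (hB : B.IsStrictUpperTriangular) :
    (A - B).IsStrictUpperTriangular := fun i j hji => by
  rw [sub_apply, hA hji, hB hji, sub_zero]

theorem smul {S : Type*} [Zero R] [SMulZeroClass S R] (c : S) {A : Matrix n n R}
    (hA : A.IsStrictUpperTriangular) : (c • A).IsStrictUpperTriangular := fun i j hji => by
  rw [smul_apply, hA hji, smul_zero]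

end IsStrictUpperTriangular

theorem isStrictUpperTriangular_single [Zero R] {i j : n} (hij : i < j) (c : R) :
    (single i j c).IsStrictUpperTriangular := fun k l hlk => by
  rw [single_apply_of_ne]
  rintro ⟨rfl, rfl⟩
  exact hlk.not_gt hij

theorem IsStrictUpperTriangular.mem_span_single [Fintype n] [Semiring R] {A : Matrix n n R}
    (hA : A.IsStrictUpperTriangular) :
    A ∈ Submodule.span R {B | ∃ i j, i < j ∧ single i j 1 = B} := by
  rw [matrix_eq_sum_single A]
  refine Submodule.sum_mem _ fun i _ => Submodule.sum_mem _ fun j _ => ?_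
  rcases lt_or_ge i j with hij | hji
  · rw [← mul_one (A i j), ← smul_eq_mul, ← smul_single]
    exact Submodule.smul_mem _ _ (Submodule.subset_span ⟨i, j, hij, rfl⟩)
  · rw [hA hji, single_zero]
    exact Submodule.zero_mem _

end Matrix

section Bracket

variable {r : ℕ}

@[simp]
theorem pairMN_zero (m : Fin 2 → ℤ) : pairMN m 0 = 0 := by
  simp [pairMN]

theorem pairMN_add (m : Fin 2 → ℤ) (n n' : Fin 2 → ℂ) :
    pairMN m (n + n') = pairMN m n + pairMN m n' := by
  simp only [pairMN, Pi.add_apply]; ring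

theorem pairMN_smul (m : Fin 2 → ℤ) (c : ℂ) (n : Fin 2 → ℂ) :
    pairMN m (c • n) = c * pairMN m n := by
  simp only [pairMN, Pi.smul_apply, smul_eq_mul]; ring

noncomputable def coefBrₗ (m m' : Fin 2 → ℤ) : tvCoef r →ₗ[ℂ] tvCoef r →ₗ[ℂ] tvCoef r :=
  LinearMap.mk₂ ℂ (fun v v' => coefBr v m v' m')
    (fun v w v' => by
      simp only [coefBr, Prod.fst_add, Prod.snd_add, pairMN_add, add_mul, add_smul, smul_add,
        mul_add, Prod.mk_add_mk, Prod.mk.injEq]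
      constructor <;> abel)
    (fun c v v' => by
      simp only [coefBr, Prod.smul_fst, Prod.smul_snd, pairMN_smul, Prod.smul_mk,
        Prod.mk.injEq, smul_mul_assoc, mul_smul_comm]
      constructor <;> module)
    (fun v v' w' => by
      simp only [coefBr, Prod.fst_add, Prod.snd_add, pairMN_add, add_mul, add_smul, smul_add,
        mul_add, Prod.mk_add_mk, Prod.mk.injEq]
      constructor <;> abel)
    (fun c v v' => by
      simp only [coefBr, Prod.smul_fst, Prod.smul_snd, pairMN_smul, Prod.smul_mk,
        Prod.mk.injEq, smul_mul_assoc, mul_smul_comm]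
      constructor <;> module)

noncomputable def tvBracketₗ : tvModule r →ₗ[ℂ] tvModule r →ₗ[ℂ] tvModule r :=
  Finsupp.lsum ℂ fun m => (Finsupp.lsum ℂ).toLinearMap ∘ₗ
    LinearMap.pi fun m' => (coefBrₗ m m').compr₂ (Finsupp.lsingle (m + m'))

theorem tvBracketₗ_apply (x y : tvModule r) : tvBracketₗ x y = tvBracket x y := by
  simp only [tvBracketₗ, tvBracket, Finsupp.lsum_apply, LinearMap.finsupp_sum_apply]
  rfl

theorem coefBr_zero_left (m m' : Fin 2 → ℤ) (v' : tvCoef r) : coefBr 0 m v' m' = 0 :=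
  (coefBrₗ m m').map_zero₂ v'

theorem coefBr_zero_right (m m' : Fin 2 → ℤ) (v : tvCoef r) : coefBr v m 0 m' = 0 :=
  (coefBrₗ m m' v).map_zero

theorem tvBracket_single_single (m m' : Fin 2 → ℤ) (v v' : tvCoef r) :
    tvBracket (single m v) (single m' v') = single (m + m') (coefBr v m v' m') := by
  unfold tvBracket
  rw [sum_single_index, sum_single_index]
  · rw [coefBr_zero_right, single_zero]
  · rw [sum_single_index] <;> rw [coefBr_zero_left, single_zero]

theorem tvBracket_mem_of_mem_span {s : Set (tvModule r)} {L : Submodule ℂ (tvModule r)}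
    (hs : ∀ a ∈ s, ∀ b ∈ s, tvBracket a b ∈ L) :
    ∀ x ∈ Submodule.span ℂ s, ∀ y ∈ Submodule.span ℂ s, tvBracket x y ∈ L := by
  intro x hx y hy
  rw [← tvBracketₗ_apply]
  refine Submodule.map₂_le.mp ?_ x hx y hy
  rw [Submodule.map₂_span_span, Submodule.span_le]
  rintro _ ⟨a, ha, b, hb, rfl⟩
  show tvBracketₗ a b ∈ L
  rw [tvBracketₗ_apply]
  exact hs a ha b hb

variable (m m' : Fin 2 → ℤ) (A A' : Matrix (Fin r) (Fin r) ℂ) (n n' : Fin 2 → ℂ)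

theorem coefBr_inl_inl : coefBr ((A, 0) : tvCoef r) m (A', 0) m' = (A * A' - A' * A, 0) := by
  simp [coefBr]

theorem coefBr_inl_inr :
    coefBr ((A, 0) : tvCoef r) m (0, n') m' = (-pairMN m n' • A, 0) := by
  simp [coefBr, neg_smul]

theorem coefBr_inr_inl :
    coefBr ((0, n) : tvCoef r) m (A', 0) m' = (pairMN m' n • A', 0) := by
  simp [coefBr]

theorem coefBr_inr_inr :
    coefBr ((0, n) : tvCoef r) m (0, n') m' = (0, pairMN m' n • n' - pairMN m n' • n) := by
  simp [coefBr]

end Bracket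

section Membership

variable {r : ℕ} {mE : Fin r → Fin r → (Fin 2 → ℤ)} {Ω : (Fin 2 → ℤ) → ℤ}
  {nvec : (Fin 2 → ℤ) → (Fin 2 → ℂ)}

theorem single_inl_mem_Ltilde {A : Matrix (Fin r) (Fin r) ℂ} (hA : A.IsStrictUpperTriangular)
    (m : Fin 2 → ℤ) : single m ((A, 0) : tvCoef r) ∈ Ltilde r mE Ω nvec := by
  let f := lsingle (R := ℂ) m ∘ₗ LinearMap.inl ℂ (Matrix (Fin r) (Fin r) ℂ) (Fin 2 → ℂ)
  refine (Submodule.map_span_le f _ _).mpr ?_ (Submodule.mem_map_of_mem hA.mem_span_single)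
  rintro _ ⟨i, j, hij, rfl⟩
  have h : single (m - mE i j + mE i j) ((Matrix.single i j 1, 0) : tvCoef r) ∈
      Ltilde r mE Ω nvec := Submodule.subset_span (Or.inl ⟨i, j, hij, _, rfl⟩)
  rwa [sub_add_cancel] at h

theorem single_inr_mem_Ltilde {v : Fin 2 → ℂ}
    (hv : v ∈ Submodule.span ℂ (Set.range fun γ => (Ω γ : ℂ) • nvec γ)) (m : Fin 2 → ℤ) :
    single m ((0, v) : tvCoef r) ∈ Ltilde r mE Ω nvec := by
  let f := lsingle (R := ℂ) m ∘ₗ LinearMap.inr ℂ (Matrix (Fin r) (Fin r) ℂ) (Fin 2 → ℂ)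
  refine (Submodule.map_span_le f _ _).mpr ?_ (Submodule.mem_map_of_mem hv)
  rintro _ ⟨γ, rfl⟩
  have h : single (m - γ + γ) ((0, (Ω γ : ℂ) • nvec γ) : tvCoef r) ∈
      Ltilde r mE Ω nvec := Submodule.subset_span (Or.inr ⟨_, γ, rfl⟩)
  rwa [sub_add_cancel] at h

end Membership

theorem Ltilde_bracket_closed_general (r : ℕ)
    (mE : Fin r → Fin r → (Fin 2 → ℤ))
    (Ω : (Fin 2 → ℤ) → ℤ) (nvec : (Fin 2 → ℤ) → (Fin 2 → ℂ)) :
    ∀ x ∈ Ltilde r mE Ω nvec, ∀ y ∈ Ltilde r mE Ω nvec,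
      tvBracket x y ∈ Ltilde r mE Ω nvec := by
  refine tvBracket_mem_of_mem_span ?_
  rintro _ (⟨i, j, hij, γ, rfl⟩ | ⟨γ₁, γ₁', rfl⟩) _ (⟨k, l, hkl, δ, rfl⟩ | ⟨γ₂, γ₂', rfl⟩) <;>
    rw [tvBracket_single_single]
  · have hS := Matrix.isStrictUpperTriangular_single hij (1 : ℂ)
    have hS' := Matrix.isStrictUpperTriangular_single hkl (1 : ℂ)
    rw [coefBr_inl_inl]
    exact single_inl_mem_Ltilde ((hS.mul hS').sub (hS'.mul hS)) _
  · rw [coefBr_inl_inr]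
    exact single_inl_mem_Ltilde ((Matrix.isStrictUpperTriangular_single hij 1).smul _) _
  · rw [coefBr_inr_inl]
    exact single_inl_mem_Ltilde ((Matrix.isStrictUpperTriangular_single hkl 1).smul _) _
  · rw [coefBr_inr_inr]
    refine single_inr_mem_Ltilde (Submodule.sub_mem _ ?_ ?_) _ <;>
      exact Submodule.smul_mem _ _ (Submodule.subset_span ⟨_, rfl⟩)

/-- `L̃` is closed under the bracket `[·,·]~`; in particular `(L̃, [·,·]~)` is a
Lie ring. -/
theorem Ltilde_bracket_closed (r : ℕ) (hr : 1 ≤ r)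
    (mE : Fin r → Fin r → (Fin 2 → ℤ))
    (Ω : (Fin 2 → ℤ) → ℤ) (nvec : (Fin 2 → ℤ) → (Fin 2 → ℂ))
    (hn : ∀ γ : Fin 2 → ℤ, pairMN γ (nvec γ) = 0) :
    ∀ x ∈ Ltilde r mE Ω nvec, ∀ y ∈ Ltilde r mE Ω nvec,
      tvBracket x y ∈ Ltilde r mE Ω nvec :=
  Ltilde_bracket_closed_general r mE Ω nvec
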